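/- In the Section 7 setting, let p be an interior vertex of Γ, let e and e' be the two oriented basic edges emanating from p, let q be the endpoint of e', and let e_F be the fiber edge emanating from q. Then there is no 2-valent GKM subgraph of Γ that contains e, e' and e_F. -/

import Mathlib

open Classical

namespace GKMPaper

/-- `ℤ^m`, the weight lattice. -/
abbrev Zm (m : ℕ) := Fin m → ℤ

/-- The relation identifying a vector with its negative. -/
def pmRel (m : ℕ) (a b : Zm m) : Prop := a = b ∨ a = -b

theorem pmRel_equiv (m : ℕ) : Equivalence (pmRel m) := by
  constructor
  · intro a; exact Or.inl rfl
  · intro a b hab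
    rcases hab with hh | hh
    · exact Or.inl hh.symm
    · exact Or.inr (by rw [hh, neg_neg])
  · intro a b c h1 h2
    rcases h1 with h1 | h1 <;> rcases h2 with h2 | h2
    · exact Or.inl (h1.trans h2)
    · exact Or.inr (h1.trans h2)
    · exact Or.inr (by rw [h1, h2])
    · exact Or.inl (by rw [h1, h2, neg_neg])

def pmSetoid (m : ℕ) : Setoid (Zm m) := ⟨pmRel m, pmRel_equiv m⟩

/-- `ℤ^m / ±1`. -/
def ZmPM (m : ℕ) := Quotient (pmSetoid m)

/-- The projection `ℤ^m → ℤ^m/±1`. -/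
def pm {m : ℕ} (a : Zm m) : ZmPM m := Quotient.mk (pmSetoid m) a

/-- Linear independence over `ℤ`. -/
def Indep {m : ℕ} (a b : Zm m) : Prop :=
  ∀ c d : ℤ, c • a + d • b = 0 → c = 0 ∧ d = 0

/-- An abstract graph with finite vertex and edge sets, each edge occurring with
both orientations, and no loops. -/
structure OrGraph : Type 1 where
  V : Type
  E : Type
  fV : Fintype V
  fE : Fintype E
  dV : DecidableEq V
  dE : DecidableEq E
  src : E → V
  dst : E → V
  rev : E → E
  rev_rev : ∀ e, rev (rev e) = e
  rev_ne : ∀ e, rev e ≠ e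
  src_rev : ∀ e, src (rev e) = dst e
  no_loop : ∀ e, src e ≠ dst e

attribute [instance] OrGraph.fV OrGraph.fE OrGraph.dV OrGraph.dE

/-- A connection on a graph. -/
structure Connection (G : OrGraph) where
  t : G.E → G.E → G.E
  src_t : ∀ e f, G.src f = G.src e → G.src (t e f) = G.dst e
  t_self : ∀ e, t e e = G.rev e
  t_inv : ∀ e f, G.src f = G.src e → t (G.rev e) (t e f) = f

/-- `k`-valence. -/
def OrGraph.Regular (G : OrGraph) (k : ℕ) : Prop :=
  ∀ v : G.V, Fintype.card {e : G.E // G.src e = v} = k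

def OrGraph.Adj (G : OrGraph) (v w : G.V) : Prop :=
  ∃ e, G.src e = v ∧ G.dst e = w

def OrGraph.IsConn (G : OrGraph) : Prop :=
  ∀ v w : G.V, Relation.ReflTransGen G.Adj v w

/-- Compatibility of a connection with an unsigned axial function. -/
def UnsignedCompat {m : ℕ} (G : OrGraph) (α : G.E → ZmPM m) (C : Connection G) : Prop :=
  (∀ e f : G.E, G.src f = G.src e → e ≠ f →
      ∀ a b : Zm m, pm a = α e → pm b = α f → Indep a b) ∧
  (∀ e f : G.E, G.src f = G.src e →
      ∃ (a g : Zm m) (c : ℤ), pm a = α f ∧ pm g = α e ∧ α (C.t e f) = pm (a + c • g)) ∧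
  (∀ e : G.E, α (G.rev e) = α e)

/-- `(G, α)` is an (unsigned) abstract GKM graph of valence `k` with labels in `ℤ^m/±1`. -/
def IsGKM {m : ℕ} (G : OrGraph) (k : ℕ) (α : G.E → ZmPM m) : Prop :=
  G.Regular k ∧ G.IsConn ∧ ∃ C : Connection G, UnsignedCompat G α C

/-- Compatibility of a connection with a signed axial function. -/
def SignedCompat {m : ℕ} (G : OrGraph) (α : G.E → Zm m) (C : Connection G) : Prop :=
  (∀ e f : G.E, G.src f = G.src e → e ≠ f → Indep (α e) (α f)) ∧
  (∀ e f : G.E, G.src f = G.src e → ∃ c : ℤ, α (C.t e f) = α f + c • α e) ∧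
  (∀ e : G.E, α (G.rev e) = - α e)

/-- `(G, α)` is a signed abstract GKM graph of valence `k` with labels in `ℤ^m`. -/
def IsSignedGKM {m : ℕ} (G : OrGraph) (k : ℕ) (α : G.E → Zm m) : Prop :=
  G.Regular k ∧ G.IsConn ∧ ∃ C : Connection G, SignedCompat G α C

/-- Effectivity of an unsigned GKM graph: at every vertex, the labels of the
outgoing edges lift to a generating set of `ℤ^m`. -/
def Effective {m : ℕ} (G : OrGraph) (α : G.E → ZmPM m) : Prop :=
  ∀ v : G.V, ∃ lift : {e : G.E // G.src e = v} → Zm m,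
    (∀ e, pm (lift e) = α e.1) ∧ Submodule.span ℤ (Set.range lift) = ⊤

def SignedEffective {m : ℕ} (G : OrGraph) (α : G.E → Zm m) : Prop :=
  ∀ v : G.V,
    Submodule.span ℤ (Set.range (fun e : {e : G.E // G.src e = v} => α e.1)) = ⊤

/-- A graph fibration: a morphism sending vertices to vertices and horizontal
edges to edges, bijectively from the horizontal edges at `p` to the edges at `π(p)`. -/
structure GraphFib (G B : OrGraph) where
  onV : G.V → B.V
  onE : G.E → B.E
  src_onE : ∀ e, onV (G.src e) ≠ onV (G.dst e) → B.src (onE e) = onV (G.src e)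
  dst_onE : ∀ e, onV (G.src e) ≠ onV (G.dst e) → B.dst (onE e) = onV (G.dst e)
  rev_onE : ∀ e, onV (G.src e) ≠ onV (G.dst e) → onE (G.rev e) = B.rev (onE e)

def GraphFib.Vertical {G B : OrGraph} (π : GraphFib G B) (e : G.E) : Prop :=
  π.onV (G.src e) = π.onV (G.dst e)

def GraphFib.IsFib {G B : OrGraph} (π : GraphFib G B) : Prop :=
  ∀ p : G.V, Function.Bijective
    (fun e : {e : G.E // G.src e = p ∧ ¬ π.Vertical e} =>
      (⟨π.onE e.1, by rw [π.src_onE e.1 e.2.2, e.2.1]⟩ : {f : B.E // B.src f = π.onV p}))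

/-- The extra conditions for a (unsigned) GKM fibration, w.r.t. connections `C`, `CB`. -/
def GKMFibCompat {m : ℕ} {G B : OrGraph} (αΓ : G.E → ZmPM m) (αB : B.E → ZmPM m)
    (π : GraphFib G B) (C : Connection G) (CB : Connection B) : Prop :=
  (∀ e, ¬ π.Vertical e → αΓ e = αB (π.onE e)) ∧
  (∀ e f, G.src f = G.src e → π.Vertical f → π.Vertical (C.t e f)) ∧
  (∀ e f, G.src f = G.src e → ¬ π.Vertical e → ¬ π.Vertical f →
      ¬ π.Vertical (C.t e f) ∧ π.onE (C.t e f) = CB.t (π.onE e) (π.onE f))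

/-- `π` is a GKM fibration of unsigned GKM graphs. -/
def IsGKMFib {m : ℕ} {G B : OrGraph} (αΓ : G.E → ZmPM m) (αB : B.E → ZmPM m)
    (π : GraphFib G B) : Prop :=
  π.IsFib ∧ ∃ (C : Connection G) (CB : Connection B),
    UnsignedCompat G αΓ C ∧ UnsignedCompat B αB CB ∧ GKMFibCompat αΓ αB π C CB

def SignedGKMFibCompat {m : ℕ} {G B : OrGraph} (sΓ : G.E → Zm m) (sB : B.E → Zm m)
    (π : GraphFib G B) (C : Connection G) (CB : Connection B) : Prop :=
  (∀ e, ¬ π.Vertical e → sΓ e = sB (π.onE e)) ∧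
  (∀ e f, G.src f = G.src e → π.Vertical f → π.Vertical (C.t e f)) ∧
  (∀ e f, G.src f = G.src e → ¬ π.Vertical e → ¬ π.Vertical f →
      ¬ π.Vertical (C.t e f) ∧ π.onE (C.t e f) = CB.t (π.onE e) (π.onE f))

/-- `π` is a signed GKM fibration of signed GKM graphs. -/
def IsSignedGKMFib {m : ℕ} {G B : OrGraph} (sΓ : G.E → Zm m) (sB : B.E → Zm m)
    (π : GraphFib G B) : Prop :=
  π.IsFib ∧ ∃ (C : Connection G) (CB : Connection B),
    SignedCompat G sΓ C ∧ SignedCompat B sB CB ∧ SignedGKMFibCompat sΓ sB π C CB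

/-- `(π, ft)` is a fiberwise signed fibration: `ft` is a lift of `αΓ` on the
vertical edges, satisfying the congruence condition w.r.t. suitable connections. -/
def IsFiberwiseSigned {m : ℕ} {G B : OrGraph} (αΓ : G.E → ZmPM m) (αB : B.E → ZmPM m)
    (π : GraphFib G B) (ft : G.E → Zm m) : Prop :=
  π.IsFib ∧
  (∀ e, π.Vertical e → pm (ft e) = αΓ e) ∧
  (∀ e, π.Vertical e → ft (G.rev e) = - ft e) ∧
  ∃ (C : Connection G) (CB : Connection B),
    UnsignedCompat G αΓ C ∧ UnsignedCompat B αB CB ∧ GKMFibCompat αΓ αB π C CB ∧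
    ∀ e f, G.src f = G.src e → π.Vertical f →
      ∃ (g : Zm m) (c : ℤ), pm g = αΓ e ∧ ft (C.t e f) = ft f + c • g

/-- Isomorphism of unsigned GKM graphs. -/
structure GKMIso {m : ℕ} (G : OrGraph) (α : G.E → ZmPM m)
    (G' : OrGraph) (α' : G'.E → ZmPM m) : Type where
  fV : G.V ≃ G'.V
  fE : G.E ≃ G'.E
  φ : Zm m ≃ₗ[ℤ] Zm m
  src_comm : ∀ e, G'.src (fE e) = fV (G.src e)
  dst_comm : ∀ e, G'.dst (fE e) = fV (G.dst e)
  rev_comm : ∀ e, fE (G.rev e) = G'.rev (fE e)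
  lab : ∀ (e : G.E) (a : Zm m), pm a = α e → α' (fE e) = pm (φ a)

/-- Isomorphism of signed GKM graphs. -/
structure SignedGKMIso {m : ℕ} (G : OrGraph) (α : G.E → Zm m)
    (G' : OrGraph) (α' : G'.E → Zm m) : Type where
  fV : G.V ≃ G'.V
  fE : G.E ≃ G'.E
  φ : Zm m ≃ₗ[ℤ] Zm m
  src_comm : ∀ e, G'.src (fE e) = fV (G.src e)
  dst_comm : ∀ e, G'.dst (fE e) = fV (G.dst e)
  rev_comm : ∀ e, fE (G.rev e) = G'.rev (fE e)
  lab : ∀ e, α' (fE e) = φ (α e)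

/-- Equivalence of fiberwise signed fibrations over the same base (identity on `ℤ^m`). -/
structure FSFEquiv {m : ℕ} {G B G' : OrGraph}
    (αΓ : G.E → ZmPM m) (π : GraphFib G B) (ft : G.E → Zm m)
    (αΓ' : G'.E → ZmPM m) (π' : GraphFib G' B) (ft' : G'.E → Zm m) : Type where
  fV : G.V ≃ G'.V
  fE : G.E ≃ G'.E
  src_comm : ∀ e, G'.src (fE e) = fV (G.src e)
  dst_comm : ∀ e, G'.dst (fE e) = fV (G.dst e)
  rev_comm : ∀ e, fE (G.rev e) = G'.rev (fE e)
  lab : ∀ e, αΓ' (fE e) = αΓ e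
  baseV : ∀ p, π'.onV (fV p) = π.onV p
  baseE : ∀ e, ¬ π.Vertical e → π'.onE (fE e) = π.onE e
  fiblab : ∀ e, π.Vertical e → ft' (fE e) = ft e

/-- Equivalence of signed GKM fibrations over the same base (identity on `ℤ^m`). -/
structure SFEquiv {m : ℕ} {G B G' : OrGraph}
    (sΓ : G.E → Zm m) (π : GraphFib G B)
    (sΓ' : G'.E → Zm m) (π' : GraphFib G' B) : Type where
  fV : G.V ≃ G'.V
  fE : G.E ≃ G'.E
  src_comm : ∀ e, G'.src (fE e) = fV (G.src e)
  dst_comm : ∀ e, G'.dst (fE e) = fV (G.dst e)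
  rev_comm : ∀ e, fE (G.rev e) = G'.rev (fE e)
  lab : ∀ e, sΓ' (fE e) = sΓ e
  baseV : ∀ p, π'.onV (fV p) = π.onV p
  baseE : ∀ e, ¬ π.Vertical e → π'.onE (fE e) = π.onE e

/-- Realizing `ℤ²` inside `ℝ² = ℂ`. -/
noncomputable def toC (a : Zm 2) : ℂ := (a 0 : ℝ) + (a 1 : ℝ) * Complex.I

def cross (a b : ℂ) : ℝ := a.re * b.im - a.im * b.re

/-- A vertex of a signed GKM graph with labels in `ℤ²` is interior if the cone
spanned by the labels of the edges emanating from it is all of `ℝ²`. -/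
def InteriorVtx (G : OrGraph) (α : G.E → Zm 2) (p : G.V) : Prop :=
  ∀ x : ℂ, ∃ c : G.E → ℝ, (∀ e, 0 ≤ c e) ∧
    x = ∑ e ∈ Finset.univ.filter (fun e : G.E => G.src e = p), c e • toC (α e)

/-- The angle from `w` to `w'`, represented in `[0, 2π)` if `ε = true`,
and in `(-2π, 0]` if `ε = false`. -/
noncomputable def angTo (ε : Bool) (w w' : ℂ) : ℝ :=
  if ε then (if (w' / w).arg < 0 then (w' / w).arg + 2 * Real.pi else (w' / w).arg)
  else (if 0 < (w' / w).arg then (w' / w).arg - 2 * Real.pi else (w' / w).arg)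

/-- The winding number of a cyclic sequence of vectors w.r.t. the orientation `ε`. -/
noncomputable def winding {nn : ℕ} [NeZero nn] (w : ZMod nn → ℂ) (ε : Bool) : ℝ :=
  (1 / (2 * Real.pi)) * ∑ i : ZMod nn, |angTo ε (w i) (w (i + 1))|

def LocallyConvex {nn : ℕ} (w : ZMod nn → ℂ) : Prop :=
  (∀ i, angTo true (w i) (w (i + 1)) ∈ Set.Ioo 0 Real.pi) ∨
  (∀ i, angTo false (w i) (w (i + 1)) ∈ Set.Ioo (-Real.pi) 0)

/-- `ε` is the preferred orientation of the locally convex sequence `w`. -/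
def Preferred {nn : ℕ} (w : ZMod nn → ℂ) (ε : Bool) : Prop :=
  (ε = true ∧ ∀ i, angTo true (w i) (w (i + 1)) ∈ Set.Ioo 0 Real.pi) ∨
  (ε = false ∧ ∀ i, angTo false (w i) (w (i + 1)) ∈ Set.Ioo (-Real.pi) 0)

/-- `P` lists the vertices of a strictly convex polygon in cyclic order. -/
def ConvexCyclic {nn : ℕ} (P : ZMod nn → ℂ) : Prop :=
  (∀ i j, j ≠ i → j ≠ i + 1 → 0 < cross (P (i + 1) - P i) (P j - P i)) ∨
  (∀ i j, j ≠ i → j ≠ i + 1 → cross (P (i + 1) - P i) (P j - P i) < 0)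

def SubAdj (G : OrGraph) (S : Set G.E) (v w : G.V) : Prop :=
  ∃ e ∈ S, G.src e = v ∧ G.dst e = w

/-- `S` is (the edge set of) a connected `2`-valent signed GKM subgraph of `(G, α)`. -/
def IsSigned2ValentSub (G : OrGraph) (α : G.E → Zm 2) (S : Set G.E) : Prop :=
  S.Nonempty ∧
  (∀ e ∈ S, G.rev e ∈ S) ∧
  (∀ v : G.V, (∃ e ∈ S, G.src e = v) → Nat.card {e : G.E // e ∈ S ∧ G.src e = v} = 2) ∧
  (∀ v w : G.V, (∃ e ∈ S, G.src e = v) → (∃ e ∈ S, G.src e = w) →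
      Relation.ReflTransGen (SubAdj G S) v w) ∧
  ∃ T : G.E → G.E → G.E,
    (∀ e f, e ∈ S → f ∈ S → G.src f = G.src e → T e f ∈ S ∧ G.src (T e f) = G.dst e) ∧
    (∀ e, e ∈ S → T e e = G.rev e) ∧
    (∀ e f, e ∈ S → f ∈ S → G.src f = G.src e → T (G.rev e) (T e f) = f) ∧
    (∀ e f, e ∈ S → f ∈ S → G.src f = G.src e → ∃ c : ℤ, α (T e f) = α f + c • α e)

/-- A `2`-valent signed GKM subgraph of polytope type: it is a cycle realized by the
boundary edges of a simple convex `2`-polytope, with labels representing the slopes. -/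
def IsPolytopeTypeSub (G : OrGraph) (α : G.E → Zm 2) (S : Set G.E) : Prop :=
  IsSigned2ValentSub G α S ∧
  ∃ np : ℕ, 3 ≤ np ∧
    ∃ (cyc : ZMod np → G.E) (P : ZMod np → ℂ) (t : ZMod np → ℝ),
      (∀ i, cyc i ∈ S) ∧
      (∀ ed ∈ S, ∃ i, ed = cyc i ∨ ed = G.rev (cyc i)) ∧
      (∀ i, G.dst (cyc i) = G.src (cyc (i + 1))) ∧
      ConvexCyclic P ∧
      (∀ i, 0 < t i) ∧
      (∀ i, P (i + 1) - P i = t i • toC (α (cyc i)))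

/-- A fibration over an `n`-gon base is of product type if the lifts of a path
once around the base are closed. -/
def ProductType {G B : OrGraph} (π : GraphFib G B) {nn : ℕ} (eB : ZMod nn → B.E) : Prop :=
  ∃ l : ZMod nn → G.E,
    ∀ i, ¬ π.Vertical (l i) ∧ π.onE (l i) = eB i ∧ G.dst (l i) = G.src (l (i + 1))

/-- `ℤ`-indexed `n`-gon data for a `2`-valent base graph. -/
structure ZGonData (B : OrGraph) (n : ℕ) where
  v : ℤ → B.V
  eB : ℤ → B.E
  v_per : ∀ i, v (i + n) = v i
  e_per : ∀ i, eB (i + n) = eB i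
  src_e : ∀ i, B.src (eB i) = v i
  dst_e : ∀ i, B.dst (eB i) = v (i + 1)
  v_inj : ∀ i j : ℤ, 0 ≤ i → i < n → 0 ≤ j → j < n → v i = v j → i = j
  v_surj : ∀ w : B.V, ∃ i : ℤ, v i = w
  e_cover : ∀ ed : B.E, ∃ i : ℤ, ed = eB i ∨ ed = B.rev (eB i)

/-- A choice of sign representatives `γ_i` of the base labels with
`γ_i ≡ -γ_{i+2} (mod γ_{i+1})` for all `i ∈ ℤ`. -/
structure GammaData {B : OrGraph} {n : ℕ} (αB : B.E → ZmPM 2) (D : ZGonData B n) where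
  γ : ℤ → Zm 2
  lift : ∀ i, pm (γ i) = αB (D.eB i)
  cong : ∀ i, ∃ c : ℤ, γ i + γ (i + 2) = c • γ (i + 1)

/-- A fiberwise signed `3`-valent GKM fibration over `(B, αB)`. -/
structure FSFOver (B : OrGraph) (αB : B.E → ZmPM 2) : Type 1 where
  G : OrGraph
  αΓ : G.E → ZmPM 2
  hΓ : IsGKM G 3 αΓ
  π : GraphFib G B
  ft : G.E → Zm 2
  isfs : IsFiberwiseSigned αΓ αB π ft

def FSFOver.Equiv {B : OrGraph} {αB : B.E → ZmPM 2} (F F' : FSFOver B αB) : Prop :=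
  Nonempty (FSFEquiv F.αΓ F.π F.ft F'.αΓ F'.π F'.ft)

/-- A signed `3`-valent GKM fibration over the signed graph `(B, sB)`. -/
structure SFOver (B : OrGraph) (sB : B.E → Zm 2) : Type 1 where
  G : OrGraph
  sΓ : G.E → Zm 2
  hΓ : IsSignedGKM G 3 sΓ
  π : GraphFib G B
  issf : IsSignedGKMFib sΓ sB π

def SFOver.Equiv {B : OrGraph} {sB : B.E → Zm 2} (F F' : SFOver B sB) : Prop :=
  Nonempty (SFEquiv F.sΓ F.π F'.sΓ F'.π)

/-- The fibration `F` realizes the classification datum `([k], η)` w.r.t. the fixed data. -/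
def RealizesFS {B : OrGraph} {αB : B.E → ZmPM 2} {n : ℕ} (D : ZGonData B n)
    (Γd : GammaData αB D) (F : FSFOver B αB) (k : ZMod n → ℤ) (η : Bool) : Prop :=
  (η = false ↔ ProductType F.π (fun i : ZMod n => D.eB i.val)) ∧
  ∃ (gE : ℤ → F.G.E) (αf : ℤ → Zm 2) (kk : ℤ → ℤ),
    (∀ i, F.π.Vertical (gE i)) ∧
    (∀ i, F.π.onV (F.G.src (gE i)) = D.v i) ∧
    (∀ i, gE (i + n) = gE i ∨ gE (i + n) = F.G.rev (gE i)) ∧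
    (∀ i, pm (αf i) = F.αΓ (gE i)) ∧
    (∀ i, ∃ c : ℤ, αf (i + 1) = αf i + c • Γd.γ i) ∧
    (∀ i, αf i = kk i • Γd.γ (i - 1) - kk (i - 1) • Γd.γ i) ∧
    (∀ i, kk i ≠ 0) ∧
    (∀ i : ZMod n, k i = kk i.val)

/-- The signed fibration `F` realizes the classification datum `([k], η)`. -/
def RealizesS {B : OrGraph} (sB : B.E → Zm 2) {αB : B.E → ZmPM 2} {n : ℕ}
    (D : ZGonData B n) (Γd : GammaData αB D) (F : SFOver B sB)
    (k : ZMod n → ℤ) (η : Bool) : Prop :=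
  (η = false ↔ ProductType F.π (fun i : ZMod n => D.eB i.val)) ∧
  ∃ (gE : ℤ → F.G.E) (αf : ℤ → Zm 2) (kk : ℤ → ℤ),
    (∀ i, F.π.Vertical (gE i)) ∧
    (∀ i, F.π.onV (F.G.src (gE i)) = D.v i) ∧
    (∀ i, gE (i + n) = gE i ∨ gE (i + n) = F.G.rev (gE i)) ∧
    (∀ i, pm (αf i) = pm (F.sΓ (gE i))) ∧
    (∀ i, ∃ c : ℤ, αf (i + 1) = αf i + c • Γd.γ i) ∧
    (∀ i, αf i = kk i • Γd.γ (i - 1) - kk (i - 1) • Γd.γ i) ∧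
    (∀ i, kk i ≠ 0) ∧
    (∀ i : ZMod n, k i = kk i.val)

def KRel (n : ℕ) (a b : {k : ZMod n → ℤ // ∀ i, k i ≠ 0}) : Prop :=
  a.1 = b.1 ∨ a.1 = - b.1

/-- `((ℤ∖{0})^n)/±1`. -/
def KClass (n : ℕ) := Quot (KRel n)

/-- The Section 7 setting: a signed GKM fibration of twisted type of a `3`-valent
signed GKM graph `Γ` over `B`, the boundary of a 2-dimensional Delzant polytope with
`n` vertices, with `Γ` having `n-1` interior vertices; with the basic edges `f i`, `h i`
over `e i` and the fiber edges `g i`. -/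
structure Section7 : Type 1 where
  n : ℕ
  hn : 3 ≤ n
  G : OrGraph
  B : OrGraph
  aG : G.E → Zm 2
  aB : B.E → Zm 2
  hG : IsSignedGKM G 3 aG
  hB : IsSignedGKM B 2 aB
  π : GraphFib G B
  hfib : IsSignedGKMFib aG aB π
  v : ZMod n → B.V
  e : ZMod n → B.E
  v_bij : Function.Bijective v
  src_e : ∀ i, B.src (e i) = v i
  dst_e : ∀ i, B.dst (e i) = v (i + 1)
  e_cover : ∀ ed : B.E, ∃ i, ed = e i ∨ ed = B.rev (e i)
  P : ZMod n → ℂ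
  tl : ZMod n → ℝ
  tl_pos : ∀ i, 0 < tl i
  polygon : ConvexCyclic P
  slope : ∀ i, P (i + 1) - P i = tl i • toC (aB (e i))
  delzant : ∀ i, (aB (e (i - 1)) 0) * (aB (e i) 1) - (aB (e (i - 1)) 1) * (aB (e i) 0) = 1 ∨
                 (aB (e (i - 1)) 0) * (aB (e i) 1) - (aB (e (i - 1)) 1) * (aB (e i) 0) = -1
  f : ZMod n → G.E
  h : ZMod n → G.E
  g : ZMod n → G.E
  f_horiz : ∀ i, ¬ π.Vertical (f i)
  h_horiz : ∀ i, ¬ π.Vertical (h i)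
  f_over : ∀ i, π.onE (f i) = e i
  h_over : ∀ i, π.onE (h i) = e i
  f_ne_h : ∀ i, f i ≠ h i
  g_vert : ∀ i, π.Vertical (g i)
  g_src : ∀ i, G.src (g i) = G.src (f i)
  g_dst : ∀ i, G.dst (g i) = G.src (h i)
  chain_f : ∀ i : ZMod n, i + 1 ≠ 0 → G.dst (f i) = G.src (f (i + 1))
  chain_h : ∀ i : ZMod n, i + 1 ≠ 0 → G.dst (h i) = G.src (h (i + 1))
  twist_f : G.dst (f (-1)) = G.src (h 0)
  twist_h : G.dst (h (-1)) = G.src (f 0)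
  k : ZMod n → ℤ
  k_ne : ∀ i, k i ≠ 0
  fiberweight : ∀ i, aG (g i) =
    k i • aB (e (i - 1)) - (if i = 0 then - k (i - 1) else k (i - 1)) • aB (e i)
  interior_count : Nat.card {p : G.V // InteriorVtx G aG p} = n - 1

/-- The type II signed structure: the signs of the labels of every second pair
of basic edges are reversed. -/
noncomputable def Section7.alphaII (S : Section7) : S.G.E → Zm 2 :=
  fun ed =>
    if ∃ i : ZMod S.n, Odd i.val ∧
        (ed = S.f i ∨ ed = S.h i ∨ ed = S.G.rev (S.f i) ∨ ed = S.G.rev (S.h i))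
    then - S.aG ed else S.aG ed

/-!
In the subgraph, transport along `e'` must carry `e` to `eF` (the subgraph has only two
edges at `q`, and `eF ≠ ē'`), so `α(eF) ≡ α(e) mod α(e')`. In `Γ`, the fibration connection
carries the fiber edge `v` at `p` along `e'` to the unique fiber edge `eF` at `q`, so
`α(eF) ≡ α(v) mod α(e')`. Hence `α(v) ≡ α(e) mod α(e')`, and the three labels at `p` lie in
the closed half-plane `{x | det(α e', α e) · det(α e', x) ≥ 0}`, so `p` is not interior.
-/

def det2 (a b : Zm 2) : ℤ := a 0 * b 1 - a 1 * b 0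

lemma det2_self (a : Zm 2) : det2 a a = 0 := by
  simp only [det2]; ring

lemma det2_smul_left (r : ℤ) (a b : Zm 2) : det2 (r • a) b = r * det2 a b := by
  simp only [det2, Pi.smul_apply, smul_eq_mul]; ring

lemma det2_add_smul_self (a b : Zm 2) (c : ℤ) : det2 a (b + c • a) = det2 a b := by
  simp only [det2, Pi.add_apply, Pi.smul_apply, smul_eq_mul]; ring

lemma Indep.det2_ne_zero {a b : Zm 2} (h : Indep a b) : det2 a b ≠ 0 := by
  intro hdet
  have h1 := h (b 1) (-a 1) (by ext i; fin_cases i <;> simp [det2] at hdet ⊢ <;> linarith)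
  have h0 := h (b 0) (-a 0) (by ext i; fin_cases i <;> simp [det2] at hdet ⊢ <;> linarith)
  have ha : a = 0 := by ext i; fin_cases i <;> simp <;> omega
  simpa using (h 1 0 (by simp [ha])).1

lemma cross_toC_sum {ι : Type*} (s : Finset ι) (a : Zm 2) (c : ι → ℝ) (b : ι → Zm 2) :
    cross (toC a) (∑ i ∈ s, c i • toC (b i)) = ∑ i ∈ s, c i * det2 a (b i) := by
  simp only [cross, toC, Complex.re_sum, Complex.im_sum, Finset.mul_sum,
    ← Finset.sum_sub_distrib]
  refine Finset.sum_congr rfl fun i _ => ?_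
  simp [det2]; ring

lemma InteriorVtx.det2_eq_zero_of_nonneg {G : OrGraph} {α : G.E → Zm 2} {p : G.V}
    (hp : InteriorVtx G α p) (β : Zm 2) (hβ : ∀ f, G.src f = p → 0 ≤ det2 β (α f))
    {e : G.E} (he : G.src e = p) : det2 β (α e) = 0 := by
  obtain ⟨c, hc, hsum⟩ := hp (-toC (α e))
  have hcross := congrArg (cross (toC β)) hsum
  rw [cross_toC_sum] at hcross
  have hlhs : cross (toC β) (-toC (α e)) = -(det2 β (α e) : ℝ) := by
    simp [cross, toC, det2]; ring
  have hrhs : 0 ≤ ∑ f ∈ Finset.univ.filter (fun f : G.E => G.src f = p),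
      c f * (det2 β (α f) : ℝ) :=
    Finset.sum_nonneg fun f hf =>
      mul_nonneg (hc f) (by exact_mod_cast hβ f (Finset.mem_filter.mp hf).2)
  have hle : (det2 β (α e) : ℝ) ≤ 0 := by linarith
  exact le_antisymm (by exact_mod_cast hle) (hβ e he)

lemma OrGraph.dst_rev (G : OrGraph) (e : G.E) : G.dst (G.rev e) = G.src e := by
  rw [← G.src_rev, G.rev_rev]

lemma OrGraph.Regular.eq_or_eq_or_eq {G : OrGraph} (hG : G.Regular 3) {a b c f : G.E}
    (hab : a ≠ b) (hac : a ≠ c) (hbc : b ≠ c) (hb : G.src b = G.src a)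
    (hc : G.src c = G.src a) (hf : G.src f = G.src a) : f = a ∨ f = b ∨ f = c := by
  by_contra! hne
  have hsub : ({a, b, c, f} : Finset G.E) ⊆ Finset.univ.filter (G.src · = G.src a) := by
    intro x hx
    simp only [Finset.mem_insert, Finset.mem_singleton] at hx
    rcases hx with rfl | rfl | rfl | rfl <;> simp [*]
  have hcard := Finset.card_le_card hsub
  rw [← Fintype.card_subtype, hG] at hcard
  rw [Finset.card_insert_of_notMem (by simp [hab, hac, hne.1.symm]),
    Finset.card_insert_of_notMem (by simp [hbc, hne.2.1.symm]),
    Finset.card_pair hne.2.2.symm] at hcard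
  omega

lemma GraphFib.vertical_rev_iff {G B : OrGraph} (π : GraphFib G B) (e : G.E) :
    π.Vertical (G.rev e) ↔ π.Vertical e := by
  rw [GraphFib.Vertical, GraphFib.Vertical, G.src_rev, G.dst_rev, eq_comm]

lemma GraphFib.IsFib.existsUnique_vertical {G B : OrGraph} {π : GraphFib G B}
    (hπ : π.IsFib) (hG : G.Regular 3) (hB : B.Regular 2) (q : G.V) :
    ∃! v, G.src v = q ∧ π.Vertical v := by
  have hhorizontal : (Finset.univ.filter fun e => G.src e = q ∧ ¬ π.Vertical e).card = 2 := by
    rw [← Fintype.card_subtype, Fintype.card_of_bijective (hπ q), hB]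
  have hall : (Finset.univ.filter fun e => G.src e = q).card = 3 := by
    rw [← Fintype.card_subtype, hG]
  have hsplit := Finset.card_filter_add_card_filter_not
    (s := Finset.univ.filter fun e => G.src e = q) (fun e => π.Vertical e)
  simp only [Finset.filter_filter] at hsplit
  obtain ⟨v, hv⟩ := Finset.card_eq_one.mp (by omega :
    (Finset.univ.filter fun e => G.src e = q ∧ π.Vertical e).card = 1)
  refine ⟨v, ?_, fun w hw => ?_⟩
  · simpa using (hv ▸ Finset.mem_singleton_self v :
      v ∈ Finset.univ.filter fun e => G.src e = q ∧ π.Vertical e)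
  · simpa [hv] using (Finset.mem_filter.mpr ⟨Finset.mem_univ w, hw⟩ :
      w ∈ Finset.univ.filter fun e => G.src e = q ∧ π.Vertical e)

lemma IsSigned2ValentSub.exists_label_eq_add_smul {G : OrGraph} {α : G.E → Zm 2}
    {Sub : Set G.E} (hSub : IsSigned2ValentSub G α Sub) {e e' eF : G.E} (he : e ∈ Sub)
    (he' : e' ∈ Sub) (heF : eF ∈ Sub) (hsrc : G.src e = G.src e') (hee' : e ≠ e')
    (hq : G.src eF = G.dst e') (hFne : eF ≠ G.rev e') :
    ∃ c : ℤ, α eF = α e + c • α e' := by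
  obtain ⟨-, hrev, hcard, -, T, hT_mem, hT_self, hT_inv, hT_label⟩ := hSub
  obtain ⟨hT_memSub, hT_src⟩ := hT_mem e' e he' he hsrc
  have hT_ne : T e' e ≠ G.rev e' := by
    intro h
    have hinv := hT_inv e' e he' he hsrc
    rw [h, hT_self _ (hrev e' he'), G.rev_rev] at hinv
    exact hee' hinv.symm
  let at_q := {x : G.E // x ∈ Sub ∧ G.src x = G.dst e'}
  have hcard_q : Nat.card at_q = 2 := hcard _ ⟨eF, heF, hq⟩
  obtain ⟨y, -, hy⟩ := (Nat.card_eq_two_iff' (⟨G.rev e', hrev e' he', G.src_rev e'⟩ : at_q)).mp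
    hcard_q
  have hT_eq : T e' e = eF := by
    have h1 := hy ⟨T e' e, hT_memSub, hT_src⟩ (by simpa [Subtype.ext_iff] using hT_ne)
    have h2 := hy ⟨eF, heF, hq⟩ (by simpa [Subtype.ext_iff] using hFne)
    simpa [Subtype.ext_iff] using h1.trans h2.symm
  simpa [hT_eq] using hT_label e' e he' he hsrc

theorem IsSignedGKMFib.not_exists_2ValentSub_through_interior {G B : OrGraph}
    {α : G.E → Zm 2} {αB : B.E → Zm 2} {π : GraphFib G B} (hfib : IsSignedGKMFib α αB π)
    (hG : G.Regular 3) (hB : B.Regular 2) {p : G.V} (hp : InteriorVtx G α p)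
    {e e' eF : G.E} (he : G.src e = p) (he' : G.src e' = p) (hee' : e ≠ e')
    (hhe : ¬ π.Vertical e) (hhe' : ¬ π.Vertical e') (heF : G.src eF = G.dst e')
    (hvF : π.Vertical eF) :
    ¬ ∃ Sub : Set G.E, IsSigned2ValentSub G α Sub ∧ e ∈ Sub ∧ e' ∈ Sub ∧ eF ∈ Sub := by
  rintro ⟨Sub, hSub, heS, he'S, heFS⟩
  obtain ⟨hπ, C, -, hC, -, -, hC_vert, -⟩ := hfib
  obtain ⟨v, ⟨hv, hvv⟩, -⟩ := hπ.existsUnique_vertical hG hB p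
  have hFne : eF ≠ G.rev e' := fun h => hhe' ((π.vertical_rev_iff e').mp (h ▸ hvF))
  obtain ⟨c₁, hc₁⟩ :=
    hSub.exists_label_eq_add_smul heS he'S heFS (he.trans he'.symm) hee' heF hFne
  have htransport : C.t e' v = eF := by
    obtain ⟨w, -, hw⟩ := hπ.existsUnique_vertical hG hB (G.dst e')
    have hsrc : G.src v = G.src e' := hv.trans he'.symm
    exact (hw _ ⟨C.src_t e' v hsrc, hC_vert e' v hsrc hvv⟩).trans (hw _ ⟨heF, hvF⟩).symm
  obtain ⟨c₂, hc₂⟩ := hC.2.1 e' v (hv.trans he'.symm)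
  have hαv : α v = α e + (c₁ - c₂) • α e' := by
    rw [htransport, hc₁] at hc₂
    rw [sub_smul, ← add_sub_assoc, hc₂, add_sub_cancel_right]
  set D := det2 (α e') (α e)
  have hD : D ≠ 0 := (hC.1 e' e (he.trans he'.symm) hee'.symm).det2_ne_zero
  have hhalf : ∀ f, G.src f = p → 0 ≤ det2 (D • α e') (α f) := by
    intro f hf
    rw [det2_smul_left]
    rcases hG.eq_or_eq_or_eq hee' (fun h => hhe (h ▸ hvv)) (fun h => hhe' (h ▸ hvv))
      (he'.trans he.symm) (hv.trans he.symm) (hf.trans he.symm) with rfl | rfl | rfl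
    · exact mul_self_nonneg D
    · simp [det2_self]
    · rw [hαv, det2_add_smul_self]; exact mul_self_nonneg D
  have hzero := hp.det2_eq_zero_of_nonneg _ hhalf he
  rw [det2_smul_left] at hzero
  exact hD (mul_self_eq_zero.mp hzero)

/-- in the Section 7 setting, for an interior vertex `p` with basic
edges `e`, `e'` emanating from `p`, `q` the endpoint of `e'` and `eF` the fiber
edge emanating from `q`, there is no 2-valent GKM subgraph of `Γ` containing
`e`, `e'` and `eF`. -/
theorem statement7 (S : Section7) (p : S.G.V) (hp : InteriorVtx S.G S.aG p)
    (e e' : S.G.E) (he : S.G.src e = p) (he' : S.G.src e' = p) (hee' : e ≠ e')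
    (hhe : ¬ S.π.Vertical e) (hhe' : ¬ S.π.Vertical e')
    (eF : S.G.E) (heF : S.G.src eF = S.G.dst e') (hvF : S.π.Vertical eF) :
    ¬ ∃ Sub : Set S.G.E, IsSigned2ValentSub S.G S.aG Sub ∧
        e ∈ Sub ∧ e' ∈ Sub ∧ eF ∈ Sub :=
  S.hfib.not_exists_2ValentSub_through_interior S.hG.1 S.hB.1 hp he he' hee' hhe hhe' heF hvF

end GKMPaper
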